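/- arXiv:2206.05597 — 7 statements merged into one kernel-verified Lean document; each statement's English description precedes it below -/
import Mathlib

section
/- Let P = (U, ≼) be a finite poset and let u, v ∈ U be incomparable in P. Then in the poset P[u→v], the element v covers u; that is, (u,v) is an edge of the Hasse diagram of P[u→v]. -/
/-- The poset `P[u→v]`: the partial order on `U` obtained as the transitive closure of
`≼ ∪ {(u,v)}`, assuming `¬ (v ≼ u)`. Explicitly, `a ≤ b` iff `a ≼ b`, or `a ≼ u` and `v ≼ b`. -/
def extend {U : Type*} (P : PartialOrder U) (u v : U) (h : ¬ P.le v u) : PartialOrder U where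
  le a b := P.le a b ∨ (P.le a u ∧ P.le v b)
  lt a b := (P.le a b ∨ (P.le a u ∧ P.le v b)) ∧ ¬ (P.le b a ∨ (P.le b u ∧ P.le v a))
  lt_iff_le_not_ge _ _ := Iff.rfl
  le_refl a := Or.inl (P.le_refl a)
  le_trans a b c hab hbc := by
    rcases hab with hab | ⟨hau, hvb⟩
    · rcases hbc with hbc | ⟨hbu, hvc⟩
      · exact Or.inl (P.le_trans _ _ _ hab hbc)
      · exact Or.inr ⟨P.le_trans _ _ _ hab hbu, hvc⟩
    · rcases hbc with hbc | ⟨hbu, hvc⟩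
      · exact Or.inr ⟨hau, P.le_trans _ _ _ hvb hbc⟩
      · exact absurd (P.le_trans _ _ _ hvb hbu) h
  le_antisymm a b hab hba := by
    rcases hab with hab | ⟨hau, hvb⟩
    · rcases hba with hba | ⟨hbu, hva⟩
      · exact P.le_antisymm _ _ hab hba
      · exact absurd (P.le_trans _ _ _ hva (P.le_trans _ _ _ hab hbu)) h
    · rcases hba with hba | ⟨hbu, hva⟩
      · exact absurd (P.le_trans _ _ _ hvb (P.le_trans _ _ _ hba hau)) h
      · exact absurd (P.le_trans _ _ _ hvb hbu) h

/-- `Sortable P c`: the poset `P` can be sorted using at most `c` comparisons.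
Either `P` is a linear order, or `c ≥ 1` and there are incomparable `u, v` such that
both outcomes `P[u→v]` and `P[v→u]` of the comparison are sortable in `c - 1` comparisons. -/
inductive Sortable {U : Type*} : PartialOrder U → ℕ → Prop
  | linear {P : PartialOrder U} {c : ℕ} (h : ∀ a b : U, P.le a b ∨ P.le b a) : Sortable P c
  | step {P : PartialOrder U} {c : ℕ} (u v : U) (h1 : ¬ P.le u v) (h2 : ¬ P.le v u)
      (s1 : Sortable (extend P u v h2) c) (s2 : Sortable (extend P v u h1) c) :
      Sortable P (c + 1)

/-- The antichain (trivially ordered poset): distinct elements are incomparable. -/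
def trivialOrder (U : Type*) : PartialOrder U where
  le a b := a = b
  lt _ _ := False
  lt_iff_le_not_ge _ _ := ⟨fun h => h.elim, fun h => (h.2 h.1.symm).elim⟩
  le_refl _ := rfl
  le_trans _ _ _ h1 h2 := Eq.trans h1 h2
  le_antisymm _ _ h1 _ := h1

/-- `S n`: the minimum number of comparisons sufficient to sort `n` elements in the
worst case, i.e. the least `c` such that the antichain on `n` elements is sortable
in `c` comparisons. -/
noncomputable def S (n : ℕ) : ℕ := sInf {c : ℕ | Sortable (trivialOrder (Fin n)) c}

/-- `numExt P` is `e(P)`, the number of linear extensions of `P`, i.e. the number of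
linear orders on `U` extending the order of `P`. -/
noncomputable def numExt {U : Type*} (P : PartialOrder U) : ℕ :=
  Nat.card {L : PartialOrder U //
    (∀ a b : U, L.le a b ∨ L.le b a) ∧ (∀ a b : U, P.le a b → L.le a b)}

/-- The efficiency `E(Q) = |U|! / (2^d · e(Q))` of a poset obtained after `d` comparisons. -/
noncomputable def efficiency {U : Type*} [Fintype U] (d : ℕ) (Q : PartialOrder U) : ℝ :=
  (Nat.factorial (Fintype.card U) : ℝ) / ((2 ^ d : ℝ) * (numExt Q : ℝ))

/-- `covers P a b`: `(a, b)` is an edge of the Hasse diagram of `P`, i.e. `b` covers `a`: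
`a ≺ b` and there is no `w` with `a ≺ w ≺ b`. -/
def covers {U : Type*} (P : PartialOrder U) (a b : U) : Prop :=
  P.lt a b ∧ ∀ w, ¬ (P.lt a w ∧ P.lt w b)

/-- The dual of a poset, obtained by reversing the order relation. -/
def dualOrder {U : Type*} (P : PartialOrder U) : PartialOrder U where
  le a b := P.le b a
  lt a b := P.le b a ∧ ¬ P.le a b
  lt_iff_le_not_ge _ _ := Iff.rfl
  le_refl a := P.le_refl a
  le_trans _ _ _ h1 h2 := P.le_trans _ _ _ h2 h1
  le_antisymm _ _ h1 h2 := P.le_antisymm _ _ h2 h1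

/-- The restriction of a poset to a subset of its underlying set. -/
def restrict {U : Type*} (P : PartialOrder U) (D : Set U) : PartialOrder D where
  le a b := P.le a.1 b.1
  lt a b := P.le a.1 b.1 ∧ ¬ P.le b.1 a.1
  lt_iff_le_not_ge _ _ := Iff.rfl
  le_refl a := P.le_refl a.1
  le_trans _ _ _ h1 h2 := P.le_trans _ _ _ h1 h2
  le_antisymm _ _ h1 h2 := Subtype.ext (P.le_antisymm _ _ h1 h2)

/-- `D` is a down-set (lower set) of `P`. -/
def isDownSet {U : Type*} (P : PartialOrder U) (D : Set U) : Prop :=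
  ∀ ⦃x⦄, x ∈ D → ∀ ⦃y⦄, P.le y x → y ∈ D

/-- `V` is an up-set (upper set) of `P`. -/
def isUpSet {U : Type*} (P : PartialOrder U) (V : Set U) : Prop :=
  ∀ ⦃x⦄, x ∈ V → ∀ ⦃y⦄, P.le x y → y ∈ V

/-- The disjoint union of two posets: elements from different parts are incomparable. -/
def sumOrder {α β : Type*} (P : PartialOrder α) (Q : PartialOrder β) :
    PartialOrder (α ⊕ β) where
  le := Sum.LiftRel P.le Q.le
  lt x y := Sum.LiftRel P.le Q.le x y ∧ ¬ Sum.LiftRel P.le Q.le y x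
  lt_iff_le_not_ge _ _ := Iff.rfl
  le_refl x := by
    cases x with
    | inl a => exact Sum.LiftRel.inl (P.le_refl a)
    | inr b => exact Sum.LiftRel.inr (Q.le_refl b)
  le_trans x y z h1 h2 := by
    cases h1 with
    | inl h1 =>
      cases h2 with
      | inl h2 => exact Sum.LiftRel.inl (P.le_trans _ _ _ h1 h2)
    | inr h1 =>
      cases h2 with
      | inr h2 => exact Sum.LiftRel.inr (Q.le_trans _ _ _ h1 h2)
  le_antisymm x y h1 h2 := by
    cases h1 with
    | inl h1 =>
      cases h2 with
      | inl h2 => exact congrArg Sum.inl (P.le_antisymm _ _ h1 h2)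
    | inr h1 =>
      cases h2 with
      | inr h2 => exact congrArg Sum.inr (Q.le_antisymm _ _ h1 h2)

section extend

variable {U : Type*} (P : PartialOrder U) {u v : U} (h : ¬ P.le v u)

theorem extend_lt : (extend P u v h).lt u v :=
  ⟨Or.inr ⟨P.le_refl u, P.le_refl v⟩, fun hvu => hvu.elim h fun hvu' => h hvu'.1⟩

theorem extend_le_left_iff {w : U} : (extend P u v h).le u w ↔ P.le u w ∨ P.le v w :=
  or_congr_right (and_iff_right (P.le_refl u))

theorem extend_le_right_iff {w : U} : (extend P u v h).le w v ↔ P.le w v ∨ P.le w u :=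
  or_congr_right (and_iff_left (P.le_refl v))

/-- Getting `u ≤ w` in `P[u→v]` from `v ≼ w` would contradict `w < v`, and getting `w ≤ v`
from `w ≼ u` would contradict `u < w`. -/
theorem le_of_extend_lt_of_lt {w : U} (huw : (extend P u v h).lt u w)
    (hwv : (extend P u v h).lt w v) : P.le u w ∧ P.le w v :=
  ⟨((extend_le_left_iff P h).1 huw.1).resolve_right fun hvw => hwv.2 (Or.inl hvw),
    ((extend_le_right_iff P h).1 hwv.1).resolve_right fun hwu => huw.2 (Or.inl hwu)⟩

end extend

theorem covers_extend_general {U : Type*} (P : PartialOrder U) (u v : U)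
    (h1 : ¬ P.le u v) (h2 : ¬ P.le v u) :
    covers (extend P u v h2) u v :=
  ⟨extend_lt P h2, fun _ ⟨huw, hwv⟩ =>
    let ⟨huw', hwv'⟩ := le_of_extend_lt_of_lt P h2 huw hwv
    h1 (P.le_trans _ _ _ huw' hwv')⟩

/-- If `u, v` are incomparable in a finite poset `P`, then `(u, v)` is an edge of the
Hasse diagram of `P[u→v]`, i.e. `v` covers `u` in `P[u→v]`. -/
theorem covers_extend {U : Type*} [Fintype U] (P : PartialOrder U) (u v : U)
    (h1 : ¬ P.le u v) (h2 : ¬ P.le v u) :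
    covers (extend P u v h2) u v :=
  covers_extend_general P u v h1 h2
end

section
/- Let P = (U, ≼) be a finite poset and let u, v ∈ U be incomparable in P. Then every edge of the Hasse diagram of P[u→v] other than (u,v) is an edge of the Hasse diagram of P; in particular, the number of edges of the Hasse diagram of P[u→v] is at most the number of edges of the Hasse diagram of P plus 1. -/
/-
Every strict relation of `P` survives in `P[u→v]`, and the only new relations go from below `u`
to above `v`. Hence a cover `a ⋖ b` of `P[u→v]` with `a ≺ b` is a cover of `P`: an element
strictly between them in `P` would be strictly between them in `P[u→v]`. A new cover must be
`u ⋖ v`: if `a ≺ u` then `a < u < b` in `P[u→v]`, and dually if `v ≺ b` then `a < v < b`.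
-/

section Extend

variable {U : Type*} (P : PartialOrder U) {u v : U} (h : ¬ P.le v u)

theorem extend_lt_of_lt {a b : U} (hab : P.lt a b) : (extend P u v h).lt a b := by
  rw [P.lt_iff_le_not_ge] at hab
  refine ⟨Or.inl hab.1, ?_⟩
  rintro (hba | ⟨hbu, hva⟩)
  · exact hab.2 hba
  · exact h (P.le_trans _ _ _ hva (P.le_trans _ _ _ hab.1 hbu))

theorem extend_lt_of_le_of_le {a b : U} (hau : P.le a u) (hvb : P.le v b) :
    (extend P u v h).lt a b := by
  refine ⟨Or.inr ⟨hau, hvb⟩, ?_⟩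
  rintro (hba | ⟨hbu, -⟩)
  · exact h (P.le_trans _ _ _ hvb (P.le_trans _ _ _ hba hau))
  · exact h (P.le_trans _ _ _ hvb hbu)

theorem eq_of_covers_extend_of_le_of_le {a b : U} (hab : covers (extend P u v h) a b)
    (hau : P.le a u) (hvb : P.le v b) : a = u ∧ b = v := by
  constructor
  · by_contra hne
    have hlt : P.lt a u := lt_of_le_of_ne' hau (Ne.symm hne)
    exact hab.2 u ⟨extend_lt_of_lt P h hlt, extend_lt_of_le_of_le P h (P.le_refl u) hvb⟩
  · by_contra hne
    have hlt : P.lt v b := lt_of_le_of_ne' hvb hne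
    exact hab.2 v ⟨extend_lt_of_le_of_le P h hau (P.le_refl v), extend_lt_of_lt P h hlt⟩

theorem covers_of_covers_extend {a b : U} (hab : covers (extend P u v h) a b)
    (hne : (a, b) ≠ (u, v)) : covers P a b := by
  obtain ⟨⟨hle | ⟨hau, hvb⟩, hnle⟩, hmax⟩ := hab
  · refine ⟨P.lt_iff_le_not_ge _ _ |>.mpr ⟨hle, fun hba => hnle (Or.inl hba)⟩, ?_⟩
    rintro w ⟨haw, hwb⟩
    exact hmax w ⟨extend_lt_of_lt P h haw, extend_lt_of_lt P h hwb⟩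
  · obtain ⟨rfl, rfl⟩ :=
      eq_of_covers_extend_of_le_of_le P h ⟨⟨Or.inr ⟨hau, hvb⟩, hnle⟩, hmax⟩ hau hvb
    exact absurd rfl hne

end Extend

theorem Nat.card_subtype_le_card_subtype_add_one {α : Type*} [Finite α] {p q : α → Prop} (x : α)
    (hpq : ∀ y, p y → y ≠ x → q y) : Nat.card {y // p y} ≤ Nat.card {y // q y} + 1 := by
  have hsub : {y | p y} ⊆ insert x {y | q y} := fun y hy =>
    (em (y = x)).elim Or.inl fun hne => Or.inr (hpq y hy hne)
  calc Nat.card {y // p y} = {y | p y}.ncard := Nat.card_coe_set_eq _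
    _ ≤ (insert x {y | q y}).ncard := Set.ncard_le_ncard hsub
    _ ≤ {y | q y}.ncard + 1 := Set.ncard_insert_le _ _
    _ = Nat.card {y // q y} + 1 := congrArg (· + 1) (Nat.card_coe_set_eq _).symm

theorem hasse_extend_general {U : Type*} [Fintype U] (P : PartialOrder U) (u v : U)
    (h2 : ¬ P.le v u) :
    (∀ a b : U, covers (extend P u v h2) a b → (a, b) ≠ (u, v) → covers P a b) ∧
    Nat.card {p : U × U // covers (extend P u v h2) p.1 p.2} ≤
      Nat.card {p : U × U // covers P p.1 p.2} + 1 :=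
  ⟨fun _ _ => covers_of_covers_extend P h2,
    Nat.card_subtype_le_card_subtype_add_one (u, v) fun _ => covers_of_covers_extend P h2⟩

/-- If `u, v` are incomparable in a finite poset `P`, then every edge of the Hasse diagram
of `P[u→v]` other than `(u, v)` is an edge of the Hasse diagram of `P`; in particular, the
number of edges of the Hasse diagram of `P[u→v]` is at most that of `P` plus `1`. -/
theorem hasse_extend {U : Type*} [Fintype U] (P : PartialOrder U) (u v : U)
    (h1 : ¬ P.le u v) (h2 : ¬ P.le v u) :
    (∀ a b : U, covers (extend P u v h2) a b → (a, b) ≠ (u, v) → covers P a b) ∧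
    Nat.card {p : U × U // covers (extend P u v h2) p.1 p.2} ≤
      Nat.card {p : U × U // covers P p.1 p.2} + 1 :=
  hasse_extend_general P u v h2
end

section
/- Let P be a poset on a finite set U obtained from the antichain on U by a sequence of c comparisons; that is, there exist posets P_0, P_1, …, P_c on U such that P_0 is the antichain, P_c = P, and for each i there are u_i, v_i incomparable in P_i with P_{i+1} = P_i[u_i→v_i]. Then the Hasse diagram of P has at most c edges. -/
/-!
Adding the comparison `u → v` to a poset creates at most one new cover relation, namely `u ⋖ v`:
a cover of `P[u→v]` that is already a relation of `P` stays a cover of `P`, and a cover `a ⋖ b`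
that is not must have `a ≤ u` and `v ≤ b` in `P`, so `u` and `v` both lie between `a` and `b` and
are forced to be `a` and `b`. Starting from the antichain, which has no covers, `c` comparisons
therefore leave at most `c` edges in the Hasse diagram.
-/

section

variable {U : Type*}

def hasseDiagram (P : PartialOrder U) : Set (U × U) := {p | covers P p.1 p.2}

theorem hasseDiagram_trivialOrder : hasseDiagram (trivialOrder U) = ∅ :=
  Set.eq_empty_of_forall_notMem fun _ hp => hp.1

theorem covers.eq_or_eq_of_le_of_le {P : PartialOrder U} {a b w : U} (hcov : covers P a b)
    (haw : P.le a w) (hwb : P.le w b) : w = a ∨ w = b := by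
  let := P
  by_contra! hne
  exact hcov.2 w ⟨lt_of_le_of_ne haw hne.1.symm, lt_of_le_of_ne hwb hne.2⟩

theorem lt_extend_of_lt {P : PartialOrder U} {u v : U} {h : ¬ P.le v u} {x y : U}
    (hxy : P.lt x y) : (extend P u v h).lt x y := by
  obtain ⟨hle, hnle⟩ := (P.lt_iff_le_not_ge x y).mp hxy
  refine ⟨Or.inl hle, ?_⟩
  rintro (hyx | ⟨hyu, hvx⟩)
  · exact hnle hyx
  · exact h (P.le_trans _ _ _ hvx (P.le_trans _ _ _ hle hyu))

theorem covers_of_covers_extend_of_le {P : PartialOrder U} {u v : U} {h : ¬ P.le v u} {a b : U}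
    (hcov : covers (extend P u v h) a b) (hab : P.le a b) : covers P a b := by
  have hba : ¬ P.le b a := fun hba => hcov.1.2 (Or.inl hba)
  refine ⟨(P.lt_iff_le_not_ge a b).mpr ⟨hab, hba⟩, fun w hw => ?_⟩
  exact hcov.2 w ⟨lt_extend_of_lt hw.1, lt_extend_of_lt hw.2⟩

theorem eq_of_covers_extend_of_not_le {P : PartialOrder U} {u v : U} {h : ¬ P.le v u} {a b : U}
    (hcov : covers (extend P u v h) a b) (hab : ¬ P.le a b) : a = u ∧ b = v := by
  obtain ⟨hau, hvb⟩ : P.le a u ∧ P.le v b := hcov.1.1.resolve_left hab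
  have hu := hcov.eq_or_eq_of_le_of_le (Or.inl hau) (Or.inr ⟨P.le_refl u, hvb⟩)
  have hv := hcov.eq_or_eq_of_le_of_le (Or.inr ⟨hau, P.le_refl v⟩) (Or.inl hvb)
  refine ⟨(hu.resolve_right ?_).symm, (hv.resolve_left ?_).symm⟩
  · rintro rfl
    exact h hvb
  · rintro rfl
    exact h hau

theorem hasseDiagram_extend_subset (P : PartialOrder U) (u v : U) (h : ¬ P.le v u) :
    hasseDiagram (extend P u v h) ⊆ insert (u, v) (hasseDiagram P) := by
  rintro ⟨a, b⟩ hcov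
  by_cases hab : P.le a b
  · exact Or.inr (covers_of_covers_extend_of_le hcov hab)
  · obtain ⟨rfl, rfl⟩ := eq_of_covers_extend_of_not_le hcov hab
    exact Or.inl rfl

theorem encard_hasseDiagram_extend_le (P : PartialOrder U) (u v : U) (h : ¬ P.le v u) :
    (hasseDiagram (extend P u v h)).encard ≤ (hasseDiagram P).encard + 1 :=
  (Set.encard_le_encard (hasseDiagram_extend_subset P u v h)).trans (Set.encard_insert_le _ _)

end

theorem hasse_card_le_of_comparisons_general {U : Type*} (P : PartialOrder U) (c : ℕ)
    (Q : ℕ → PartialOrder U) (h0 : Q 0 = trivialOrder U) (hc : Q c = P)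
    (hstep : ∀ i < c, ∃ (u v : U) (h1 : ¬ (Q i).le u v) (h2 : ¬ (Q i).le v u),
      Q (i + 1) = extend (Q i) u v h2) :
    Nat.card {p : U × U // covers P p.1 p.2} ≤ c := by
  have hQ : ∀ i ≤ c, (hasseDiagram (Q i)).encard ≤ i := by
    intro i
    induction i with
    | zero => simp [h0, hasseDiagram_trivialOrder]
    | succ i ih =>
      intro hi
      obtain ⟨u, v, -, h2, hQi⟩ := hstep i (by omega)
      rw [hQi, Nat.cast_succ]
      exact (encard_hasseDiagram_extend_le _ u v h2).trans (by gcongr; exact ih (by omega))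
  subst hc
  exact ENat.toNat_le_of_le_natCast (hQ c le_rfl)

/-- If a poset `P` on a finite set `U` is obtained from the antichain on `U` by a sequence
of `c` comparisons, then the Hasse diagram of `P` has at most `c` edges. -/
theorem hasse_card_le_of_comparisons {U : Type*} [Fintype U] (P : PartialOrder U) (c : ℕ)
    (Q : ℕ → PartialOrder U) (h0 : Q 0 = trivialOrder U) (hc : Q c = P)
    (hstep : ∀ i < c, ∃ (u v : U) (h1 : ¬ (Q i).le u v) (h2 : ¬ (Q i).le v u),
      Q (i + 1) = extend (Q i) u v h2) :
    Nat.card {p : U × U // covers P p.1 p.2} ≤ c :=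
  hasse_card_le_of_comparisons_general P c Q h0 hc hstep
end

section
/- Let R be a finite relation on a set U that is a Hasse diagram, let (u,v) ∈ R, let R₁ = R \ {(u,v)}, and let R₂ = R₁ ∪ {(x,v) : (x,u) ∈ R and (x,v) ∉ R₁*} ∪ {(u,y) : (v,y) ∈ R and (u,y) ∉ R₁*}, where S* denotes the reflexive-transitive closure of a relation S. Then R₁ and R₂ are Hasse diagrams. -/
/-- The reflexive-transitive closure `S*` of a relation on `U` given as a set of pairs. -/
def closRel {U : Type*} (R : Set (U × U)) : U → U → Prop :=
  Relation.ReflTransGen (fun a b => (a, b) ∈ R)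

/-- The covering relation of a partial order `le` on `U`: `(a, b)` is a covering pair iff
`a ≺ b` and there is no `w` with `a ≺ w ≺ b` (where `x ≺ y` means `le x y ∧ x ≠ y`). -/
def coverRel {U : Type*} (le : U → U → Prop) (a b : U) : Prop :=
  (le a b ∧ a ≠ b) ∧ ∀ w, ¬ ((le a w ∧ a ≠ w) ∧ (le w b ∧ w ≠ b))

/-- `R` is a Hasse diagram: its reflexive-transitive closure `R*` is a partial order
(antisymmetric; reflexivity and transitivity are automatic) and `R` equals the covering
relation of `R*` (i.e. `R` is acyclic and transitively reduced). -/
def IsHasseDiagram {U : Type*} (R : Set (U × U)) : Prop :=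
  (∀ a b : U, closRel R a b → closRel R b a → a = b) ∧
  (∀ a b : U, (a, b) ∈ R ↔ coverRel (closRel R) a b)

/-!
Write `≤` for `R*` and `≤₁` for `R₁*`. Every `R*`-path either avoids the edge `(u, v)` or splits
there, so `a ≤ b` gives `a ≤₁ b` or `a ≤₁ u ∧ v ≤₁ b`. Since `u ⋖ v`, deleting the single pair
`(u, v)` from `≤` leaves a partial order `≤'` (`closRelErase R u v`), and every edge of `R₂` is a
covering pair of `≤'`: for an old edge this is inherited from `≤`; for a new edge `(x, v)`, the
splitting together with `x ≰₁ v` forces any `w` with `x ≤ w < v` into `{x, u}`, and `w = u` is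
excluded in `≤'` (dually for `(u, y)`). As `R₂* ⊆ ≤'`, these pairs are covering pairs of `R₂*` as
well. That `R₁` is a Hasse diagram needs only `R₁ ⊆ R`.
-/

section

variable {U : Type*}

theorem closRel_mono {S T : Set (U × U)} (h : S ⊆ T) {a b : U} (hab : closRel S a b) :
    closRel T a b :=
  Relation.ReflTransGen.mono (fun _ _ hxy => h hxy) _ _ hab

theorem closRel_or_of_diff_singleton {R : Set (U × U)} {u v a b : U} (hab : closRel R a b) :
    closRel (R \ {(u, v)}) a b ∨
      (closRel (R \ {(u, v)}) a u ∧ closRel (R \ {(u, v)}) v b) := by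
  induction hab with
  | refl => exact .inl .refl
  | @tail b c _ hbc ih =>
    by_cases hedge : (b, c) = (u, v)
    · obtain ⟨rfl, rfl⟩ := Prod.ext_iff.1 hedge
      exact .inr ⟨ih.elim id And.left, .refl⟩
    · have hbc' : (b, c) ∈ R \ {(u, v)} := ⟨hbc, hedge⟩
      exact ih.imp (·.tail hbc') (And.imp_right (·.tail hbc'))

theorem coverRel_of_le {le le' : U → U → Prop} (hle : ∀ a b, le' a b → le a b) {a b : U}
    (hab : le' a b) (h : coverRel le a b) : coverRel le' a b :=
  ⟨⟨hab, h.1.2⟩, fun w ⟨⟨haw, haw'⟩, hwb, hwb'⟩ =>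
    h.2 w ⟨⟨hle _ _ haw, haw'⟩, hle _ _ hwb, hwb'⟩⟩

theorem isHasseDiagram_of_forall_coverRel {S : Set (U × U)}
    (hanti : ∀ a b, closRel S a b → closRel S b a → a = b)
    (hcov : ∀ a b, (a, b) ∈ S → coverRel (closRel S) a b) : IsHasseDiagram S := by
  refine ⟨hanti, fun a b => ⟨hcov a b, fun ⟨⟨hab, hne⟩, hmin⟩ => ?_⟩⟩
  rcases Relation.ReflTransGen.cases_head hab with rfl | ⟨c, hac, hcb⟩
  · exact absurd rfl hne
  · by_cases hc : c = b
    · exact hc ▸ hac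
    · exact absurd ⟨⟨.single hac, (hcov a c hac).1.2⟩, hcb, hc⟩ (hmin c)

def closRelErase (R : Set (U × U)) (u v : U) (a b : U) : Prop :=
  closRel R a b ∧ (a, b) ≠ (u, v)

namespace IsHasseDiagram

variable {R : Set (U × U)} {u v : U}

theorem antisymm (hR : IsHasseDiagram R) {a b : U} (hab : closRel R a b)
    (hba : closRel R b a) : a = b :=
  hR.1 a b hab hba

theorem coverRel_of_mem (hR : IsHasseDiagram R) {a b : U} (hab : (a, b) ∈ R) :
    coverRel (closRel R) a b :=
  (hR.2 a b).1 hab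

theorem ne_of_mem (hR : IsHasseDiagram R) {a b : U} (hab : (a, b) ∈ R) : a ≠ b :=
  (hR.coverRel_of_mem hab).1.2

theorem of_subset (hR : IsHasseDiagram R) {S : Set (U × U)} (hS : S ⊆ R) :
    IsHasseDiagram S :=
  isHasseDiagram_of_forall_coverRel
    (fun _ _ hab hba => hR.antisymm (closRel_mono hS hab) (closRel_mono hS hba))
    (fun _ _ hab => coverRel_of_le (fun _ _ => closRel_mono hS) (.single hab)
      (hR.coverRel_of_mem (hS hab)))

/-- Transitivity of `closRelErase R u v` is where `u ⋖ v` enters: `u ≤ b ≤ v` forces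
`b ∈ {u, v}`. -/
theorem closRel_le_closRelErase (hR : IsHasseDiagram R) (huv : (u, v) ∈ R) {S : Set (U × U)}
    (hS : ∀ a b, (a, b) ∈ S → closRelErase R u v a b) {a b : U} (hab : closRel S a b) :
    closRelErase R u v a b := by
  induction hab with
  | refl => exact ⟨.refl, fun h => hR.ne_of_mem huv (by cases h; rfl)⟩
  | @tail b c _ hbc ih =>
    obtain ⟨hab, hab'⟩ := ih
    obtain ⟨hbc, hbc'⟩ := hS b c hbc
    refine ⟨hab.trans hbc, fun hac => ?_⟩
    obtain ⟨rfl, rfl⟩ := Prod.ext_iff.1 hac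
    exact (hR.coverRel_of_mem huv).2 b
      ⟨⟨hab, fun h => hbc' (h ▸ rfl)⟩, hbc, fun h => hab' (h ▸ rfl)⟩

theorem coverRel_closRelErase_of_mem (hR : IsHasseDiagram R) {a b : U} (hab : (a, b) ∈ R)
    (hne : (a, b) ≠ (u, v)) : coverRel (closRelErase R u v) a b :=
  coverRel_of_le (fun _ _ => And.left) ⟨.single hab, hne⟩ (hR.coverRel_of_mem hab)

theorem coverRel_closRelErase_of_pred (hR : IsHasseDiagram R) (huv : (u, v) ∈ R) {x : U}
    (hxu : (x, u) ∈ R) (hxv : ¬ closRel (R \ {(u, v)}) x v) :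
    coverRel (closRelErase R u v) x v := by
  have hx : x ≠ u := hR.ne_of_mem hxu
  refine ⟨⟨⟨(Relation.ReflTransGen.single hxu).tail huv, by simp [hx]⟩,
    fun h => hxv (h ▸ .refl)⟩, ?_⟩
  rintro w ⟨⟨⟨hxw, -⟩, hxw'⟩, ⟨hwv, hwu⟩, hwv'⟩
  have hxw₁ : closRel (R \ {(u, v)}) x w := by
    rcases closRel_or_of_diff_singleton hxw with h | ⟨-, hvw⟩
    · exact h
    · exact absurd (hR.antisymm hwv (closRel_mono Set.sdiff_subset hvw)) hwv'
  have hwu₁ : closRel (R \ {(u, v)}) w u := by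
    rcases closRel_or_of_diff_singleton hwv with h | ⟨h, -⟩
    · exact absurd (hxw₁.trans h) hxv
    · exact h
  exact (hR.coverRel_of_mem hxu).2 w
    ⟨⟨hxw, hxw'⟩, closRel_mono Set.sdiff_subset hwu₁, fun h => hwu (h ▸ rfl)⟩

theorem coverRel_closRelErase_of_succ (hR : IsHasseDiagram R) (huv : (u, v) ∈ R) {y : U}
    (hvy : (v, y) ∈ R) (huy : ¬ closRel (R \ {(u, v)}) u y) :
    coverRel (closRelErase R u v) u y := by
  have hy : v ≠ y := hR.ne_of_mem hvy
  refine ⟨⟨⟨(Relation.ReflTransGen.single huv).tail hvy, by simp [hy.symm]⟩,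
    fun h => huy (h ▸ .refl)⟩, ?_⟩
  rintro w ⟨⟨⟨huw, hwv⟩, huw'⟩, ⟨hwy, -⟩, hwy'⟩
  have hwy₁ : closRel (R \ {(u, v)}) w y := by
    rcases closRel_or_of_diff_singleton hwy with h | ⟨hwu, -⟩
    · exact h
    · exact absurd (hR.antisymm huw (closRel_mono Set.sdiff_subset hwu)) huw'
  have hvw₁ : closRel (R \ {(u, v)}) v w := by
    rcases closRel_or_of_diff_singleton huw with h | ⟨-, h⟩
    · exact absurd (h.trans hwy₁) huy
    · exact h
  exact (hR.coverRel_of_mem hvy).2 w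
    ⟨⟨closRel_mono Set.sdiff_subset hvw₁, fun h => hwv (h ▸ rfl)⟩, hwy, hwy'⟩

end IsHasseDiagram

end

theorem isHasseDiagram_remove_edge_general {U : Type*} (R : Set (U × U))
    (hR : IsHasseDiagram R) (u v : U) (huv : (u, v) ∈ R)
    (R₁ R₂ : Set (U × U)) (hR₁ : R₁ = R \ {(u, v)})
    (hR₂ : R₂ = R₁ ∪ {q | ∃ x, q = (x, v) ∧ (x, u) ∈ R ∧ ¬ closRel R₁ x v}
                   ∪ {q | ∃ y, q = (u, y) ∧ (v, y) ∈ R ∧ ¬ closRel R₁ u y}) :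
    IsHasseDiagram R₁ ∧ IsHasseDiagram R₂ := by
  subst hR₁
  refine ⟨hR.of_subset Set.sdiff_subset, ?_⟩
  have hcov : ∀ a b, (a, b) ∈ R₂ → coverRel (closRelErase R u v) a b := by
    subst hR₂
    rintro a b ((hab | ⟨x, ⟨⟩, hxu, hxv⟩) | ⟨y, ⟨⟩, hvy, huy⟩)
    · exact hR.coverRel_closRelErase_of_mem hab.1 hab.2
    · exact hR.coverRel_closRelErase_of_pred huv hxu hxv
    · exact hR.coverRel_closRelErase_of_succ huv hvy huy
  have hle : ∀ a b, closRel R₂ a b → closRelErase R u v a b := fun _ _ =>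
    hR.closRel_le_closRelErase huv (fun a b hab => (hcov a b hab).1.1)
  exact isHasseDiagram_of_forall_coverRel
    (fun a b hab hba => hR.antisymm (hle a b hab).1 (hle b a hba).1)
    (fun a b hab => coverRel_of_le hle (.single hab) (hcov a b hab))

/-- Removing an edge `(u,v)` from a Hasse diagram `R` yields a Hasse diagram `R₁`, and adding
to `R₁` the edges `(x, v)` for `(x, u) ∈ R` with `(x, v) ∉ R₁*` and `(u, y)` for `(v, y) ∈ R`
with `(u, y) ∉ R₁*` yields a Hasse diagram `R₂`. -/
theorem isHasseDiagram_remove_edge {U : Type*} [Fintype U] (R : Set (U × U))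
    (hR : IsHasseDiagram R) (u v : U) (huv : (u, v) ∈ R)
    (R₁ R₂ : Set (U × U)) (hR₁ : R₁ = R \ {(u, v)})
    (hR₂ : R₂ = R₁ ∪ {q | ∃ x, q = (x, v) ∧ (x, u) ∈ R ∧ ¬ closRel R₁ x v}
                   ∪ {q | ∃ y, q = (u, y) ∧ (v, y) ∈ R ∧ ¬ closRel R₁ u y}) :
    IsHasseDiagram R₁ ∧ IsHasseDiagram R₂ :=
  isHasseDiagram_remove_edge_general R hR u v huv R₁ R₂ hR₁ hR₂
end

section
/- Let R be a finite relation on a set U that is a Hasse diagram, let (u,v) ∈ R, and let R₁ = R \ {(u,v)}, where S* denotes the reflexive-transitive closure of a relation S. Then for every relation Q on U that is a Hasse diagram, one has (Q ∪ {(u,v)})* = R* if and only if R₁* ⊆ Q* ⊆ R*. -/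
/-! A covering pair of `S*` is joined by a path in `S`; leaving its source by a step that is not
a loop already lands on its target, so the pair is an edge of `S`. Hence a Hasse diagram `R` is
contained in every `T` with `T* = R*`; with `T = Q ∪ {(u, v)}` this gives `R₁ ⊆ Q`, and the
rest is monotonicity of the closure. -/

theorem Relation.ReflTransGen.exists_head_ne {α : Type*} {r : α → α → Prop} {a b : α}
    (h : Relation.ReflTransGen r a b) (hab : a ≠ b) :
    ∃ c, a ≠ c ∧ r a c ∧ Relation.ReflTransGen r c b := by
  induction h using Relation.ReflTransGen.head_induction_on with
  | refl => exact absurd rfl hab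
  | @head x y hxy hyb ih =>
    by_cases hxy' : x = y
    · subst hxy'
      exact ih hab
    · exact ⟨y, hxy', hxy, hyb⟩

section

variable {U : Type*}

theorem mem_of_coverRel_closRel {S : Set (U × U)} {a b : U} (h : coverRel (closRel S) a b) :
    (a, b) ∈ S := by
  obtain ⟨⟨hab, hne⟩, hbetween⟩ := h
  obtain ⟨c, hac, hSac, hcb⟩ := hab.exists_head_ne hne
  by_cases hcb' : c = b
  · exact hcb' ▸ hSac
  · exact absurd ⟨⟨.single hSac, hac⟩, ⟨hcb, hcb'⟩⟩ (hbetween c)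

theorem subset_setOf_closRel (S : Set (U × U)) : S ⊆ {p : U × U | closRel S p.1 p.2} :=
  fun _ hp => .single hp

theorem setOf_closRel_mono {S T : Set (U × U)} (h : S ⊆ T) :
    {p : U × U | closRel S p.1 p.2} ⊆ {p : U × U | closRel T p.1 p.2} :=
  fun _ hp => Relation.ReflTransGen.mono (fun _ _ hab => h hab) _ _ hp

theorem setOf_closRel_subset_iff {S T : Set (U × U)} :
    {p : U × U | closRel S p.1 p.2} ⊆ {p : U × U | closRel T p.1 p.2} ↔
      S ⊆ {p : U × U | closRel T p.1 p.2} :=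
  ⟨(subset_setOf_closRel S).trans,
    fun h _ hp => Relation.reflTransGen_closed (fun _ _ hab => h hab) _ _ hp⟩

theorem IsHasseDiagram.subset_of_setOf_closRel_eq {R T : Set (U × U)} (hR : IsHasseDiagram R)
    (h : {p : U × U | closRel T p.1 p.2} = {p : U × U | closRel R p.1 p.2}) : R ⊆ T := by
  have hclos : closRel T = closRel R := by
    ext a b
    exact Set.ext_iff.1 h (a, b)
  rintro ⟨a, b⟩ hab
  exact mem_of_coverRel_closRel (hclos ▸ (hR.2 a b).1 hab)

end

theorem closure_insert_eq_iff_general {U : Type*} (R : Set (U × U))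
    (hR : IsHasseDiagram R) (u v : U) (huv : (u, v) ∈ R)
    (R₁ : Set (U × U)) (hR₁ : R₁ = R \ {(u, v)})
    (Q : Set (U × U)) :
    {p : U × U | closRel (Q ∪ {(u, v)}) p.1 p.2} = {p : U × U | closRel R p.1 p.2} ↔
      {p : U × U | closRel R₁ p.1 p.2} ⊆ {p : U × U | closRel Q p.1 p.2} ∧
      {p : U × U | closRel Q p.1 p.2} ⊆ {p : U × U | closRel R p.1 p.2} := by
  subst hR₁
  constructor
  · intro h
    have hRQ : R ⊆ {(u, v)} ∪ Q := Set.union_comm Q _ ▸ hR.subset_of_setOf_closRel_eq h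
    exact ⟨setOf_closRel_mono (Set.sdiff_subset_iff.2 hRQ),
      h ▸ setOf_closRel_mono Set.subset_union_left⟩
  · rintro ⟨h₁, h₂⟩
    have hQ_sub : Q ∪ {(u, v)} ⊆ {p : U × U | closRel R p.1 p.2} :=
      Set.union_subset ((subset_setOf_closRel Q).trans h₂)
        (Set.singleton_subset_iff.2 (subset_setOf_closRel R huv))
    have hR_sub : R ⊆ {p : U × U | closRel (Q ∪ {(u, v)}) p.1 p.2} := by
      intro p hp
      by_cases hpuv : p = (u, v)
      · exact .single (Or.inr hpuv)
      · exact setOf_closRel_mono Set.subset_union_left (h₁ (subset_setOf_closRel _ ⟨hp, hpuv⟩))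
    exact (setOf_closRel_subset_iff.2 hQ_sub).antisymm (setOf_closRel_subset_iff.2 hR_sub)

/-- Let `R` be a Hasse diagram, `(u, v) ∈ R` and `R₁ = R \\ {(u, v)}`. Then for every Hasse
diagram `Q` one has `(Q ∪ {(u,v)})* = R*` if and only if `R₁* ⊆ Q* ⊆ R*`. -/
theorem closure_insert_eq_iff {U : Type*} [Fintype U] (R : Set (U × U))
    (hR : IsHasseDiagram R) (u v : U) (huv : (u, v) ∈ R)
    (R₁ : Set (U × U)) (hR₁ : R₁ = R \ {(u, v)})
    (Q : Set (U × U)) (hQ : IsHasseDiagram Q) :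
    {p : U × U | closRel (Q ∪ {(u, v)}) p.1 p.2} = {p : U × U | closRel R p.1 p.2} ↔
      {p : U × U | closRel R₁ p.1 p.2} ⊆ {p : U × U | closRel Q p.1 p.2} ∧
      {p : U × U | closRel Q p.1 p.2} ⊆ {p : U × U | closRel R p.1 p.2} :=
  closure_insert_eq_iff_general R hR u v huv R₁ hR₁ Q
end

section
/- Let (U, ≼) be a finite partial order and let M ⊆ ≼ be a perfect matching on U; that is, U is partitioned into two-element blocks {u,v} with (u,v) ∈ M and u ≼ v, where each element of U lies in exactly one pair of M and distinct pairs of M are disjoint. Then the number of down-sets of (U, ≼) is at most √3^{|U|} = 3^{|U|/2}. -/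
/-!
A down-set meets each matched pair `u ≼ v` in `∅`, `{u}` or `{u, v}`, never in `{v}` alone, and,
since the pairs cover `U`, it is determined by these traces. So there are at most `3 ^ |M|`
down-sets, while `|U| = 2 |M|`.
-/

theorem card_eq_two_mul_card_of_perfect_matching {U : Type*} (M : Set (U × U))
    (hne : ∀ p ∈ M, p.1 ≠ p.2)
    (hperfect : ∀ w : U, ∃! p, p ∈ M ∧ (w = p.1 ∨ w = p.2)) :
    Nat.card U = 2 * Nat.card M := by
  let endpoint : M × Bool → U := fun pb => if pb.2 then pb.1.1.1 else pb.1.1.2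
  have hmem : ∀ pb : M × Bool, endpoint pb = pb.1.1.1 ∨ endpoint pb = pb.1.1.2 := by
    rintro ⟨p, _ | _⟩ <;> simp [endpoint]
  have hbij : Function.Bijective endpoint := by
    constructor
    · rintro ⟨⟨p, hp⟩, b⟩ ⟨⟨q, hq⟩, c⟩ h
      have hpq : p = q :=
        (hperfect _).unique ⟨hp, hmem (⟨p, hp⟩, b)⟩ ⟨hq, h ▸ hmem (⟨q, hq⟩, c)⟩
      subst hpq
      cases b <;> cases c
      · rfl
      · exact absurd h.symm (hne p hp)
      · exact absurd h (hne p hp)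
      · rfl
    · intro w
      obtain ⟨p, hp, rfl | rfl⟩ := (hperfect w).exists
      · exact ⟨(⟨p, hp⟩, true), rfl⟩
      · exact ⟨(⟨p, hp⟩, false), rfl⟩
  rw [← Nat.card_eq_of_bijective endpoint hbij, Nat.card_prod,
    Nat.card_eq_fintype_card (α := Bool), Fintype.card_bool, mul_comm]

theorem card_downSets_le_three_pow_card {U : Type*} [Finite U] (P : PartialOrder U)
    (M : Set (U × U)) (hM : ∀ p ∈ M, P.le p.1 p.2)
    (hcover : ∀ w : U, ∃ p ∈ M, w = p.1 ∨ w = p.2) :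
    Nat.card {D : Set U // isDownSet P D} ≤ 3 ^ Nat.card M := by
  classical
  -- `x.2 ≤ x.1` on `Bool × Bool` says "if the upper element is in, so is the lower one".
  let trace : {D : Set U // isDownSet P D} → M → {x : Bool × Bool // x.2 ≤ x.1} :=
    fun D p => ⟨(decide (p.1.1 ∈ D.1), decide (p.1.2 ∈ D.1)), by
      simpa [Bool.le_iff_imp] using fun h => D.2 h (hM p p.2)⟩
  have htrace : Function.Injective trace := by
    rintro ⟨D, hD⟩ ⟨E, hE⟩ h
    ext w
    obtain ⟨p, hp, rfl | rfl⟩ := hcover w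
    · simpa [trace] using congrArg (fun t => (t ⟨p, hp⟩).1.1) h
    · simpa [trace] using congrArg (fun t => (t ⟨p, hp⟩).1.2) h
  calc Nat.card {D : Set U // isDownSet P D}
      ≤ Nat.card (M → {x : Bool × Bool // x.2 ≤ x.1}) :=
        Nat.card_le_card_of_injective _ htrace
    _ = 3 ^ Nat.card M := by rw [Nat.card_fun, Nat.card_eq_fintype_card]; rfl

/-- If a finite poset `(U, ≼)` admits a perfect matching `M ⊆ ≼` (every element of `U` lies
in exactly one pair of `M`, and each pair consists of two distinct comparable elements), then
the number of down-sets of `(U, ≼)` is at most `√3 ^ |U|`. -/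
theorem card_downSets_le_of_perfect_matching {U : Type*} [Fintype U] (P : PartialOrder U)
    (M : Set (U × U)) (hM : ∀ p ∈ M, P.le p.1 p.2 ∧ p.1 ≠ p.2)
    (hperfect : ∀ w : U, ∃! p, p ∈ M ∧ (w = p.1 ∨ w = p.2)) :
    (Nat.card {D : Set U // isDownSet P D} : ℝ) ≤ Real.sqrt 3 ^ Fintype.card U := by
  have hcard : Fintype.card U = 2 * Nat.card M := by
    rw [← Nat.card_eq_fintype_card]
    exact card_eq_two_mul_card_of_perfect_matching M (fun p hp => (hM p hp).2) hperfect
  calc (Nat.card {D : Set U // isDownSet P D} : ℝ)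
      ≤ (3 : ℝ) ^ Nat.card M := by
        exact_mod_cast card_downSets_le_three_pow_card P M (fun p hp => (hM p hp).1)
          fun w => (hperfect w).exists
    _ = Real.sqrt 3 ^ Fintype.card U := by
        rw [hcard, pow_mul, Real.sq_sqrt zero_le_three]
end

section
/- Let P = (U, ≼) be a finite poset and let u, v ∈ U be distinct with ¬(v ≼ u). Let DU(u,v) be the set of pairs (D, V) where D is a down-set of P, V is an up-set of P, v ∈ V, D ∩ V = ∅, and U \ (D ∪ V) = {u}. Then e(P[u→v]) = Σ_{(D,V) ∈ DU(u,v)} e(P restricted to D) · e(P restricted to V). -/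
/-!
Cutting a linear extension `L` of `P[u→v]` at `u` yields the down-set `D = {x | x <_L u}` and
the up-set `V = {x | u <_L x}` of `P`, with `v ∈ V` because `u <_L v`, together with the linear
extensions `L|D` and `L|V` of `P|D` and `P|V`. Conversely, for `(D, V) ∈ DU(u,v)`, listing `D`
by a linear extension of `P|D`, then `u`, then `V` by a linear extension of `P|V` gives a linear
extension of `P[u→v]`. The two constructions are inverse to each other, so the linear extensions
of `P[u→v]` are counted by `∑_{(D,V)} e(P|D) · e(P|V)`.
-/

section LinearExtensions

variable {W : Type*}

def LinExt (Q : PartialOrder W) : Type _ :=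
  {L : PartialOrder W // (∀ a b : W, L.le a b ∨ L.le b a) ∧ ∀ a b : W, Q.le a b → L.le a b}

theorem numExt_eq_natCard_linExt (Q : PartialOrder W) : numExt Q = Nat.card (LinExt Q) := rfl

instance [Finite W] : Finite (PartialOrder W) :=
  Finite.of_injective (fun L : PartialOrder W => L.le) fun _ _ h =>
    PartialOrder.ext fun a b => iff_of_eq (congrFun (congrFun h a) b)

instance [Finite W] (Q : PartialOrder W) : Finite (LinExt Q) := Subtype.finite

end LinearExtensions

theorem extend_le_imp_iff {U : Type*} {P : PartialOrder U} {u v : U} (h : ¬ P.le v u)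
    (L : PartialOrder U) :
    (∀ a b, (extend P u v h).le a b → L.le a b) ↔ (∀ a b, P.le a b → L.le a b) ∧ L.le u v := by
  refine ⟨fun hL => ⟨fun a b hab => hL a b (.inl hab), hL u v (.inr ⟨P.le_refl _, P.le_refl _⟩)⟩,
    ?_⟩
  rintro ⟨hP, huv⟩ a b (hab | ⟨hau, hvb⟩)
  · exact hP a b hab
  · exact L.le_trans _ _ _ (hP a u hau) (L.le_trans _ _ _ huv (hP v b hvb))

section Concat

variable {U : Type*} {D V : Set U}

/-- `D` ordered by `L₁`, then the elements outside `D ∪ V` as an antichain, then `V` ordered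
by `L₂`. -/
inductive ConcatLE (L₁ : PartialOrder D) (L₂ : PartialOrder V) : U → U → Prop
  | refl (a : U) : ConcatLE L₁ L₂ a a
  | inLeft {a b : U} (ha : a ∈ D) (hb : b ∈ D) : L₁.le ⟨a, ha⟩ ⟨b, hb⟩ → ConcatLE L₁ L₂ a b
  | inRight {a b : U} (ha : a ∈ V) (hb : b ∈ V) : L₂.le ⟨a, ha⟩ ⟨b, hb⟩ → ConcatLE L₁ L₂ a b
  | fromLeft {a b : U} : a ∈ D → b ∉ D → ConcatLE L₁ L₂ a b
  | toRight {a b : U} : a ∉ V → b ∈ V → ConcatLE L₁ L₂ a b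

variable {L₁ : PartialOrder D} {L₂ : PartialOrder V} {a b u : U}

theorem not_concatLE_of_notMem_left (hDV : Disjoint D V) (ha : a ∉ D) (hb : b ∈ D) :
    ¬ ConcatLE L₁ L₂ a b := by
  rintro (_ | ⟨ha', -, -⟩ | ⟨-, hb', -⟩ | ⟨ha', -⟩ | ⟨-, hb'⟩)
  exacts [ha hb, ha ha', hDV.notMem_of_mem_left hb hb', ha ha', hDV.notMem_of_mem_left hb hb']

theorem not_concatLE_of_notMem_right (hDV : Disjoint D V) (ha : a ∈ V) (hb : b ∉ V) :
    ¬ ConcatLE L₁ L₂ a b := by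
  rintro (_ | ⟨ha', -, -⟩ | ⟨-, hb', -⟩ | ⟨ha', -⟩ | ⟨ha', -⟩)
  exacts [hb ha, hDV.notMem_of_mem_left ha' ha, hb hb', hDV.notMem_of_mem_left ha' ha, ha' ha]

theorem concatLE_iff_of_mem_left (hDV : Disjoint D V) (ha : a ∈ D) (hb : b ∈ D) :
    ConcatLE L₁ L₂ a b ↔ L₁.le ⟨a, ha⟩ ⟨b, hb⟩ := by
  refine ⟨?_, .inLeft ha hb⟩
  rintro (_ | ⟨_, _, hab⟩ | ⟨ha', -, -⟩ | ⟨-, hb'⟩ | ⟨-, hb'⟩)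
  exacts [L₁.le_refl _, hab, (hDV.notMem_of_mem_left ha ha').elim, (hb' hb).elim,
    (hDV.notMem_of_mem_left hb hb').elim]

theorem concatLE_iff_of_mem_right (hDV : Disjoint D V) (ha : a ∈ V) (hb : b ∈ V) :
    ConcatLE L₁ L₂ a b ↔ L₂.le ⟨a, ha⟩ ⟨b, hb⟩ := by
  refine ⟨?_, .inRight ha hb⟩
  rintro (_ | ⟨ha', -, -⟩ | ⟨_, _, hab⟩ | ⟨ha', -⟩ | ⟨ha', -⟩)
  exacts [L₂.le_refl _, (hDV.notMem_of_mem_left ha' ha).elim, hab,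
    (hDV.notMem_of_mem_left ha' ha).elim, (ha' ha).elim]

-- An `abbrev`, so that instance unification sees through `(concat L₁ L₂ hDV).le` to `ConcatLE`.
variable (L₁ L₂) in
abbrev concat (hDV : Disjoint D V) : PartialOrder U where
  le := ConcatLE L₁ L₂
  lt a b := ConcatLE L₁ L₂ a b ∧ ¬ ConcatLE L₁ L₂ b a
  lt_iff_le_not_ge _ _ := Iff.rfl
  le_refl := .refl
  le_trans a b c hab hbc := by
    classical
    rcases hab with _ | ⟨ha, hb, hab⟩ | ⟨ha, hb, hab⟩ | ⟨ha, hb⟩ | ⟨ha, hb⟩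
    · exact hbc
    · by_cases hc : c ∈ D
      · exact .inLeft ha hc (L₁.le_trans _ _ _ hab ((concatLE_iff_of_mem_left hDV hb hc).1 hbc))
      · exact .fromLeft ha hc
    · have hc : c ∈ V := by_contra fun hc => not_concatLE_of_notMem_right hDV hb hc hbc
      exact .inRight ha hc (L₂.le_trans _ _ _ hab ((concatLE_iff_of_mem_right hDV hb hc).1 hbc))
    · exact .fromLeft ha fun hc => not_concatLE_of_notMem_left hDV hb hc hbc
    · exact .toRight ha (by_contra fun hc => not_concatLE_of_notMem_right hDV hb hc hbc)
  le_antisymm a b hab hba := by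
    rcases hab with _ | ⟨ha, hb, hab⟩ | ⟨ha, hb, hab⟩ | ⟨ha, hb⟩ | ⟨ha, hb⟩
    · rfl
    · exact congrArg Subtype.val
        (L₁.le_antisymm _ _ hab ((concatLE_iff_of_mem_left hDV hb ha).1 hba))
    · exact congrArg Subtype.val
        (L₂.le_antisymm _ _ hab ((concatLE_iff_of_mem_right hDV hb ha).1 hba))
    · exact absurd hba (not_concatLE_of_notMem_left hDV hb ha)
    · exact absurd hba (not_concatLE_of_notMem_right hDV hb ha)

variable (L₁ L₂) in
theorem restrict_concat_left (hDV : Disjoint D V) : restrict (concat L₁ L₂ hDV) D = L₁ :=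
  PartialOrder.ext fun a b => concatLE_iff_of_mem_left hDV a.2 b.2

variable (L₁ L₂) in
theorem restrict_concat_right (hDV : Disjoint D V) : restrict (concat L₁ L₂ hDV) V = L₂ :=
  PartialOrder.ext fun a b => concatLE_iff_of_mem_right hDV a.2 b.2

theorem notMem_and_notMem_iff (hcut : Set.univ \ (D ∪ V) = {u}) {x : U} :
    x ∉ D ∧ x ∉ V ↔ x = u := by
  simpa using Set.ext_iff.1 hcut x

theorem concat_total (hcut : Set.univ \ (D ∪ V) = {u}) (h₁ : ∀ a b, L₁.le a b ∨ L₁.le b a)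
    (h₂ : ∀ a b, L₂.le a b ∨ L₂.le b a) : ∀ a b, ConcatLE L₁ L₂ a b ∨ ConcatLE L₁ L₂ b a := by
  classical
  intro a b
  by_cases haD : a ∈ D <;> by_cases hbD : b ∈ D
  · exact (h₁ ⟨a, haD⟩ ⟨b, hbD⟩).imp (.inLeft haD hbD) (.inLeft hbD haD)
  · exact .inl (.fromLeft haD hbD)
  · exact .inr (.fromLeft hbD haD)
  by_cases haV : a ∈ V <;> by_cases hbV : b ∈ V
  · exact (h₂ ⟨a, haV⟩ ⟨b, hbV⟩).imp (.inRight haV hbV) (.inRight hbV haV)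
  · exact .inr (.toRight hbV haV)
  · exact .inl (.toRight haV hbV)
  · obtain rfl := (notMem_and_notMem_iff hcut).1 ⟨haD, haV⟩
    obtain rfl := (notMem_and_notMem_iff hcut).1 ⟨hbD, hbV⟩
    exact .inl (.refl _)

theorem concat_lt_iff_mem_left (hDV : Disjoint D V) (hcut : Set.univ \ (D ∪ V) = {u}) {x : U} :
    (concat L₁ L₂ hDV).lt x u ↔ x ∈ D := by
  obtain ⟨huD, huV⟩ := (notMem_and_notMem_iff hcut).2 rfl
  refine ⟨fun ⟨hxu, hux⟩ => by_contra fun hxD => ?_,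
    fun hxD => ⟨.fromLeft hxD huD, not_concatLE_of_notMem_left hDV huD hxD⟩⟩
  by_cases hxV : x ∈ V
  · exact not_concatLE_of_notMem_right hDV hxV huV hxu
  · exact hux ((notMem_and_notMem_iff hcut).1 ⟨hxD, hxV⟩ ▸ .refl x)

theorem concat_lt_iff_mem_right (hDV : Disjoint D V) (hcut : Set.univ \ (D ∪ V) = {u}) {x : U} :
    (concat L₁ L₂ hDV).lt u x ↔ x ∈ V := by
  obtain ⟨huD, huV⟩ := (notMem_and_notMem_iff hcut).2 rfl
  refine ⟨fun ⟨hux, hxu⟩ => by_contra fun hxV => ?_,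
    fun hxV => ⟨.toRight huV hxV, not_concatLE_of_notMem_right hDV hxV huV⟩⟩
  by_cases hxD : x ∈ D
  · exact not_concatLE_of_notMem_left hDV huD hxD hux
  · exact hxu ((notMem_and_notMem_iff hcut).1 ⟨hxD, hxV⟩ ▸ .refl x)

theorem concatLE_of_le {P : PartialOrder U} (hD : isDownSet P D) (hV : isUpSet P V)
    (hcut : Set.univ \ (D ∪ V) = {u}) (e₁ : ∀ a b, (restrict P D).le a b → L₁.le a b)
    (e₂ : ∀ a b, (restrict P V).le a b → L₂.le a b) (hab : P.le a b) : ConcatLE L₁ L₂ a b := by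
  classical
  by_cases haD : a ∈ D
  · by_cases hbD : b ∈ D
    · exact .inLeft haD hbD (e₁ ⟨a, haD⟩ ⟨b, hbD⟩ hab)
    · exact .fromLeft haD hbD
  have hbD : b ∉ D := fun hbD => haD (hD hbD hab)
  by_cases haV : a ∈ V
  · exact .inRight haV (hV haV hab) (e₂ ⟨a, haV⟩ ⟨b, hV haV hab⟩ hab)
  by_cases hbV : b ∈ V
  · exact .toRight haV hbV
  · obtain rfl := (notMem_and_notMem_iff hcut).1 ⟨haD, haV⟩
    obtain rfl := (notMem_and_notMem_iff hcut).1 ⟨hbD, hbV⟩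
    exact .refl _

end Concat

section Split

variable {U : Type*} (L : PartialOrder U) (u : U)

noncomputable abbrev linearOrderOfTotal (hL : ∀ a b, L.le a b ∨ L.le b a) : LinearOrder U :=
  { L with le_total := hL, toDecidableLE := Classical.decRel _ }

theorem disjoint_setOf_lt_setOf_gt : Disjoint {x | L.lt x u} {x | L.lt u x} := by
  let _ : PartialOrder U := L
  exact Set.disjoint_left.2 fun _ hxu hux => lt_asymm hxu hux

theorem univ_diff_setOf_lt_union_setOf_gt (hL : ∀ a b, L.le a b ∨ L.le b a) :
    Set.univ \ ({x | L.lt x u} ∪ {x | L.lt u x}) = {u} := by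
  let _ := linearOrderOfTotal L hL
  ext x
  simp only [Set.mem_sdiff, Set.mem_univ, Set.mem_union, Set.mem_ofPred_eq, true_and,
    Set.mem_singleton_iff, not_or]
  exact ⟨fun ⟨hxu, hux⟩ => (lt_trichotomy x u).resolve_left hxu |>.resolve_right hux,
    fun hxu => ⟨hxu.not_lt, hxu.not_gt⟩⟩

variable {L u} {P : PartialOrder U}

theorem isDownSet_setOf_lt (hP : ∀ a b, P.le a b → L.le a b) : isDownSet P {x | L.lt x u} := by
  let _ : PartialOrder U := L
  exact fun _ hxu y hyx => lt_of_le_of_lt (hP y _ hyx) hxu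

theorem isUpSet_setOf_gt (hP : ∀ a b, P.le a b → L.le a b) : isUpSet P {x | L.lt u x} := by
  let _ : PartialOrder U := L
  exact fun _ hux y hxy => lt_of_lt_of_le hux (hP _ y hxy)

variable (L u) in
theorem concat_restrict_setOf_lt_restrict_setOf_gt (hL : ∀ a b, L.le a b ∨ L.le b a) :
    concat (restrict L {x | L.lt x u}) (restrict L {x | L.lt u x})
      (disjoint_setOf_lt_setOf_gt L u) = L := by
  let _ := linearOrderOfTotal L hL
  refine PartialOrder.ext fun a b => ⟨?_, fun hab => ?_⟩
  · rintro (_ | ⟨_, _, hab⟩ | ⟨_, _, hab⟩ | ⟨hau, hbu⟩ | ⟨hua, hub⟩)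
    · exact le_refl a
    · exact hab
    · exact hab
    · exact (le_of_lt hau).trans (not_lt.1 hbu)
    · exact (not_lt.1 hua).trans (le_of_lt hub)
  by_cases hau : a < u
  · by_cases hbu : b < u
    · exact .inLeft hau hbu hab
    · exact .fromLeft hau hbu
  by_cases hua : u < a
  · exact .inRight hua (hua.trans_le hab) hab
  obtain rfl : a = u := le_antisymm (not_lt.1 hua) (not_lt.1 hau)
  obtain rfl | hab := hab.eq_or_lt
  · exact .refl a
  · exact .toRight hua hab

end Split

section Bijection

variable {U : Type*} {P : PartialOrder U} {u v : U}

variable (P u v) in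
def downUpPairs : Set (Set U × Set U) :=
  {p | isDownSet P p.1 ∧ isUpSet P p.2 ∧ v ∈ p.2 ∧ p.1 ∩ p.2 = ∅ ∧ Set.univ \ (p.1 ∪ p.2) = {u}}

theorem disjoint_of_mem_downUpPairs {p : Set U × Set U} (hp : p ∈ downUpPairs P u v) :
    Disjoint p.1 p.2 :=
  Set.disjoint_iff_inter_eq_empty.2 hp.2.2.2.1

theorem concat_isLinExt (h : ¬ P.le v u) {p : Set U × Set U} (hp : p ∈ downUpPairs P u v)
    (L₁ : LinExt (restrict P p.1)) (L₂ : LinExt (restrict P p.2)) :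
    (∀ a b, ConcatLE L₁.1 L₂.1 a b ∨ ConcatLE L₁.1 L₂.1 b a) ∧
      ∀ a b, (extend P u v h).le a b → ConcatLE L₁.1 L₂.1 a b := by
  have hDV := disjoint_of_mem_downUpPairs hp
  obtain ⟨hD, hV, hvV, -, hcut⟩ := hp
  refine ⟨concat_total hcut L₁.2.1 L₂.2.1, (extend_le_imp_iff h (concat _ _ hDV)).2 ⟨?_, ?_⟩⟩
  · exact fun _ _ => concatLE_of_le hD hV hcut L₁.2.2 L₂.2.2
  · exact .toRight ((notMem_and_notMem_iff hcut).2 rfl).2 hvV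

def concatLinExt (h : ¬ P.le v u)
    (x : Σ p : downUpPairs P u v, LinExt (restrict P p.1.1) × LinExt (restrict P p.1.2)) :
    LinExt (extend P u v h) :=
  ⟨concat x.2.1.1 x.2.2.1 (disjoint_of_mem_downUpPairs x.1.2),
    concat_isLinExt h x.1.2 x.2.1 x.2.2⟩

theorem concatLinExt_injective (h : ¬ P.le v u) : Function.Injective (concatLinExt h) := by
  rintro ⟨⟨⟨D, V⟩, hp⟩, ⟨L₁, _⟩, ⟨L₂, _⟩⟩ ⟨⟨⟨D', V'⟩, hp'⟩, ⟨M₁, _⟩, ⟨M₂, _⟩⟩ hglue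
  have hDV := disjoint_of_mem_downUpPairs hp
  have hDV' := disjoint_of_mem_downUpPairs hp'
  have hL : concat L₁ L₂ hDV = concat M₁ M₂ hDV' := congrArg Subtype.val hglue
  have hcut := hp.2.2.2.2
  have hcut' := hp'.2.2.2.2
  obtain rfl : D = D' := Set.ext fun x => by
    rw [← concat_lt_iff_mem_left hDV hcut, ← concat_lt_iff_mem_left hDV' hcut', hL]
  obtain rfl : V = V' := Set.ext fun x => by
    rw [← concat_lt_iff_mem_right hDV hcut, ← concat_lt_iff_mem_right hDV' hcut', hL]
  obtain rfl : L₁ = M₁ := by rw [← restrict_concat_left L₁ L₂ hDV, hL, restrict_concat_left]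
  obtain rfl : L₂ = M₂ := by rw [← restrict_concat_right L₁ L₂ hDV, hL, restrict_concat_right]
  rfl

theorem concatLinExt_surjective (huv : u ≠ v) (h : ¬ P.le v u) :
    Function.Surjective (concatLinExt h) := by
  rintro ⟨L, hL, hext⟩
  obtain ⟨hP, hu_v⟩ := (extend_le_imp_iff h L).1 hext
  have hv : L.lt u v :=
    (L.lt_iff_le_not_ge u v).2 ⟨hu_v, fun hvu => huv (L.le_antisymm _ _ hu_v hvu)⟩
  refine ⟨⟨⟨({x | L.lt x u}, {x | L.lt u x}), isDownSet_setOf_lt hP, isUpSet_setOf_gt hP, hv,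
    Set.disjoint_iff_inter_eq_empty.1 (disjoint_setOf_lt_setOf_gt L u),
    univ_diff_setOf_lt_union_setOf_gt L u hL⟩,
    ⟨restrict L _, fun a b => hL a b, fun a b => hP a b⟩,
    ⟨restrict L _, fun a b => hL a b, fun a b => hP a b⟩⟩, Subtype.ext ?_⟩
  exact concat_restrict_setOf_lt_restrict_setOf_gt L u hL

end Bijection

/-- For distinct `u, v` in a finite poset `P` with `¬ (v ≼ u)`, the number of linear
extensions of `P[u→v]` equals the sum over all pairs `(D, V)` with `D` a down-set, `V` an
up-set, `v ∈ V`, `D ∩ V = ∅` and `U \\ (D ∪ V) = {u}`, of `e(P|D) · e(P|V)`. -/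
theorem numExt_extend_eq_sum {U : Type*} [Fintype U] (P : PartialOrder U) (u v : U)
    (huv : u ≠ v) (h : ¬ P.le v u) :
    numExt (extend P u v h) =
      ∑ᶠ p ∈ {p : Set U × Set U | isDownSet P p.1 ∧ isUpSet P p.2 ∧ v ∈ p.2 ∧
          p.1 ∩ p.2 = ∅ ∧ Set.univ \ (p.1 ∪ p.2) = {u}},
        numExt (restrict P p.1) * numExt (restrict P p.2) := by
  change _ = ∑ᶠ p ∈ downUpPairs P u v, _
  have := Fintype.ofFinite (downUpPairs P u v)
  rw [numExt_eq_natCard_linExt, ← Nat.card_congr (Equiv.ofBijective _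
    ⟨concatLinExt_injective h, concatLinExt_surjective huv h⟩), Nat.card_sigma,
    ← finsum_set_coe_eq_finsum_mem, finsum_eq_sum_of_fintype]
  simp only [Nat.card_prod, numExt_eq_natCard_linExt]
end
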